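/- arXiv:math-ph/9908024 — 3 statements merged into one kernel-verified Lean document; each statement's English description precedes it below -/
import Mathlib

section
/- For 0 < |v| < 1, the field energy of the charge soliton satisfies (1/2)∫ d³k |ρ̂(k)|² [k² - (k·v)²]⁻² ((1+v²)k² - (3-v²)(v·k)²) = m_e [ (1/|v|) log((1+|v|)/(1-|v|)) - 1 ], where m_e = (1/2)∫ d³k |ρ̂(k)|²/k². -/
/-
Writing `s` for the cosine of the angle between `k` and `v`, the integrand is
`ρ̂(k)² / ‖k‖² * W(s)` with `W = fieldEnergyWeight ‖v‖` a rational function of `s`. In polar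
coordinates the integral of such a product splits into the radial integral that also gives `m_e`
and the mean of `W` over the unit sphere. By Archimedes' hat-box theorem the height `⟪u, θ⟫` of a
uniformly distributed point `θ` of the sphere is uniformly distributed on `[-1, 1]`, so that mean
is `½ ∫₋₁¹ W(s) ds`, which an explicit primitive evaluates.

Archimedes' theorem itself comes from integrating `h(x₀ / ‖x‖) ψ(‖x‖)` over `ℝ × ℝ²`: polar
coordinates in `ℝ²`, the substitution `ρ = √(t² + r²)` and Tonelli on the cone `|t| < ρ` turn it
into `∫ ρ² ψ(ρ) dρ * ∫₋₁¹ h`.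
-/

open MeasureTheory Measure Real Set Metric
open scoped ENNReal RealInnerProductSpace

section Polar

variable {E : Type*} [NormedAddCommGroup E] [NormedSpace ℝ E] [FiniteDimensional ℝ E]
  [Nontrivial E] [MeasurableSpace E] [BorelSpace E] (μ : Measure E) [μ.IsAddHaarMeasure]

theorem lintegral_eq_lintegral_toSphere_mul_lintegral_volumeIoiPow {W : E → ℝ≥0∞}
    (hW : AEMeasurable W μ) {H : sphere (0 : E) 1 → ℝ≥0∞} (hH : Measurable H)
    (hH_ne_top : ∀ θ, H θ ≠ ∞) (w : Ioi (0 : ℝ) → ℝ≥0∞) (hW_eq : ∀ θ r, W (r.1 • θ.1) = H θ * w r) :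
    ∫⁻ x, W x ∂μ = (∫⁻ θ, H θ ∂μ.toSphere) *
      ∫⁻ r, w r ∂volumeIoiPow (Module.finrank ℝ E - 1) := by
  let Φ := homeomorphUnitSphereProd E
  have hΦ := μ.measurePreserving_homeomorphUnitSphereProd
  have hW_comp : W ∘ (Subtype.val ∘ Φ.symm) = fun p => H p.1 * w p.2 := by
    funext p
    rw [Function.comp_apply, Function.comp_apply, homeomorphUnitSphereProd_symm_apply_coe, hW_eq]
  have hval : QuasiMeasurePreserving (Subtype.val : ({0}ᶜ : Set E) → E) (μ.comap (↑)) μ := by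
    refine ⟨measurable_subtype_coe, ?_⟩
    rw [map_comap_subtype_coe (measurableSet_singleton 0).compl]
    exact restrict_le_self.absolutelyContinuous
  have hprod : AEMeasurable (fun p => H p.1 * w p.2)
      (μ.toSphere.prod (volumeIoiPow (Module.finrank ℝ E - 1))) := by
    rw [← hW_comp]
    exact hW.comp_quasiMeasurePreserving
      (hval.comp (hΦ.symm Φ.toMeasurableEquiv).quasiMeasurePreserving)
  calc ∫⁻ x, W x ∂μ = ∫⁻ x : ({0}ᶜ : Set E), W x ∂(μ.comap (↑)) := by
        rw [lintegral_subtype_comap (measurableSet_singleton 0).compl, restrict_compl_singleton]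
    _ = ∫⁻ p, H p.1 * w p.2 ∂(μ.toSphere.prod (volumeIoiPow (Module.finrank ℝ E - 1))) := by
        rw [← hW_comp, ← (hΦ.symm Φ.toMeasurableEquiv).lintegral_comp_emb
          Φ.symm.measurableEmbedding]
        rfl
    _ = _ := by
        rw [lintegral_prod _ hprod, ← lintegral_mul_const _ hH]
        exact lintegral_congr fun θ => lintegral_const_mul' _ _ (hH_ne_top θ)

theorem lintegral_volumeIoiPow {g : ℝ → ℝ≥0∞} (hg : Measurable g) (n : ℕ) :
    ∫⁻ r, g r ∂volumeIoiPow n = ∫⁻ r in Ioi 0, ENNReal.ofReal (r ^ n) * g r := by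
  refine (lintegral_withDensity_eq_lintegral_mul _ (by fun_prop)
    (hg.comp measurable_subtype_coe)).trans ?_
  exact lintegral_subtype_comap measurableSet_Ioi (fun r => ENNReal.ofReal (r ^ n) * g r)

theorem lintegral_fun_norm_addHaar {g : ℝ → ℝ≥0∞} (hg : Measurable g) :
    ∫⁻ x, g ‖x‖ ∂μ = μ.toSphere univ *
      ∫⁻ r in Ioi 0, ENNReal.ofReal (r ^ (Module.finrank ℝ E - 1)) * g r := by
  rw [lintegral_eq_lintegral_toSphere_mul_lintegral_volumeIoiPow μ (W := fun x => g ‖x‖)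
    (hg.comp measurable_norm).aemeasurable measurable_const (fun _ => ENNReal.one_ne_top)
    (fun r => g r) ?_, lintegral_one, lintegral_volumeIoiPow hg]
  intro θ r
  rw [one_mul, norm_smul, mem_sphere_zero_iff_norm.mp θ.2, mul_one, norm_of_nonneg r.2.out.le]

end Polar

section InnerProduct

variable {E : Type*} [NormedAddCommGroup E] [InnerProductSpace ℝ E]

theorem inner_smul_div_norm_smul (u θ : E) {r : ℝ} (hr : 0 < r) :
    ⟪u, r • θ⟫ / ‖r • θ‖ = ⟪u, θ⟫ / ‖θ‖ := by
  rw [inner_smul_right, norm_smul, norm_of_nonneg hr.le, mul_div_mul_left _ _ hr.ne']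

theorem inner_div_norm_mem_Icc {u : E} (hu : ‖u‖ = 1) (x : E) : ⟪u, x⟫ / ‖x‖ ∈ Icc (-1) 1 := by
  rw [mem_Icc, ← abs_le, abs_div, abs_norm]
  refine div_le_one_of_le₀ ?_ (norm_nonneg x)
  simpa [hu] using abs_real_inner_le_norm u x

end InnerProduct

theorem lintegral_Ioi_comp_sqrt_sq_add_sq (t : ℝ) (g : ℝ → ℝ≥0∞) :
    ∫⁻ r in Ioi 0, ENNReal.ofReal r * g √(t ^ 2 + r ^ 2) =
      ∫⁻ ρ in Ioi |t|, ENNReal.ofReal ρ * g ρ := by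
  have hpos : ∀ r : ℝ, 0 < r → 0 < √(t ^ 2 + r ^ 2) := fun r hr => by positivity
  have hmono : StrictMonoOn (fun r => √(t ^ 2 + r ^ 2)) (Ioi 0) := fun r₁ hr₁ r₂ _ h =>
    Real.sqrt_lt_sqrt (by positivity) (by nlinarith [hr₁.out])
  have himage : (fun r => √(t ^ 2 + r ^ 2)) '' Ioi 0 = Ioi |t| := by
    ext ρ
    refine ⟨?_, fun hρ => ⟨√(ρ ^ 2 - t ^ 2), ?_, ?_⟩⟩
    · rintro ⟨r, hr, rfl⟩
      rw [mem_Ioi, ← Real.sqrt_sq_eq_abs]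
      exact Real.sqrt_lt_sqrt (sq_nonneg t) (by nlinarith [hr.out])
    · have : t ^ 2 < ρ ^ 2 := by
        rw [← sq_abs t]; exact pow_lt_pow_left₀ hρ.out (abs_nonneg t) two_ne_zero
      exact Real.sqrt_pos.mpr (by linarith)
    · have hρ0 : 0 ≤ ρ := (abs_nonneg t).trans hρ.out.le
      have : t ^ 2 ≤ ρ ^ 2 := by
        rw [← sq_abs t]; exact pow_le_pow_left₀ (abs_nonneg t) hρ.out.le 2
      dsimp only
      rw [Real.sq_sqrt (by linarith), add_sub_cancel, Real.sqrt_sq hρ0]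
  have hderiv : ∀ r ∈ Ioi (0 : ℝ),
      HasDerivWithinAt (fun r => √(t ^ 2 + r ^ 2)) (r / √(t ^ 2 + r ^ 2)) (Ioi 0) r := by
    intro r hr
    have h := ((hasDerivAt_pow 2 r).const_add (t ^ 2)).sqrt
      (by have := hr.out; positivity)
    refine h.hasDerivWithinAt.congr_deriv ?_
    field_simp
    norm_num
  rw [← himage, lintegral_image_eq_lintegral_abs_deriv_mul measurableSet_Ioi hderiv hmono.injOn]
  refine setLIntegral_congr_fun measurableSet_Ioi fun r hr => ?_
  have hs := hpos r hr
  rw [abs_of_pos (div_pos hr hs), ← mul_assoc, ← ENNReal.ofReal_mul (div_pos hr hs).le,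
    div_mul_cancel₀ _ hs.ne']

theorem lintegral_Ioo_comp_div {ρ : ℝ} (hρ : 0 < ρ) (h : ℝ → ℝ≥0∞) :
    ∫⁻ t in Ioo (-ρ) ρ, h (t / ρ) = ENNReal.ofReal ρ * ∫⁻ s in Ioo (-1) 1, h s := by
  have himage : (ρ * ·) '' Ioo (-1 : ℝ) 1 = Ioo (-ρ) ρ := by
    rw [image_mul_left_Ioo hρ, mul_neg_one, mul_one]
  rw [← himage, lintegral_image_eq_lintegral_abs_deriv_mul measurableSet_Ioo
    (fun s _ => (hasDerivAt_const_mul ρ).hasDerivWithinAt) (mul_right_injective₀ hρ.ne').injOn,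
    ← lintegral_const_mul' _ _ ENNReal.ofReal_ne_top, abs_of_pos hρ]
  simp_rw [mul_div_cancel_left₀ _ hρ.ne']

theorem lintegral_lintegral_Ioi_abs_swap {F : ℝ → ℝ → ℝ≥0∞}
    (hF : Measurable (Function.uncurry F)) :
    ∫⁻ t, ∫⁻ ρ in Ioi |t|, F t ρ = ∫⁻ ρ in Ioi 0, ∫⁻ t in Ioo (-ρ) ρ, F t ρ := by
  have hcone : ∀ t ρ, (Ioi |t|).indicator (F t) ρ = (Ioo (-ρ) ρ).indicator (F · ρ) t := by
    intro t ρ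
    simp only [indicator, mem_Ioi, mem_Ioo, ← abs_lt]
  have hmeas : Measurable (Function.uncurry fun t ρ => (Ioi |t|).indicator (F t) ρ) := by
    have : MeasurableSet {p : ℝ × ℝ | |p.1| < p.2} := measurableSet_lt (by fun_prop) (by fun_prop)
    exact hF.indicator this
  calc ∫⁻ t, ∫⁻ ρ in Ioi |t|, F t ρ = ∫⁻ t, ∫⁻ ρ, (Ioi |t|).indicator (F t) ρ := by
        simp_rw [lintegral_indicator measurableSet_Ioi]
    _ = ∫⁻ ρ, ∫⁻ t, (Ioo (-ρ) ρ).indicator (F · ρ) t := by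
        simp_rw [← hcone]; exact lintegral_lintegral_swap hmeas.aemeasurable
    _ = ∫⁻ ρ, (Ioi 0).indicator (fun ρ => ∫⁻ t in Ioo (-ρ) ρ, F t ρ) ρ := by
        refine lintegral_congr fun ρ => ?_
        rw [lintegral_indicator measurableSet_Ioo]
        by_cases hρ : 0 < ρ
        · rw [indicator_of_mem (show ρ ∈ Ioi 0 from hρ)]
        · rw [indicator_of_notMem (show ρ ∉ Ioi 0 from hρ), Ioo_eq_empty (by linarith),
            restrict_empty, lintegral_zero_measure]
    _ = _ := lintegral_indicator measurableSet_Ioi _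

namespace EuclideanSpace

noncomputable def consMeasurableEquiv (n : ℕ) :
    ℝ × EuclideanSpace ℝ (Fin n) ≃ᵐ EuclideanSpace ℝ (Fin (n + 1)) :=
  ((MeasurableEquiv.refl ℝ).prodCongr (MeasurableEquiv.toLp 2 (Fin n → ℝ)).symm).trans
    ((MeasurableEquiv.piFinSuccAbove (fun _ : Fin (n + 1) => ℝ) 0).symm.trans
      (MeasurableEquiv.toLp 2 (Fin (n + 1) → ℝ)))

theorem measurePreserving_consMeasurableEquiv (n : ℕ) :
    MeasurePreserving (consMeasurableEquiv n) := by
  have h₁ := (MeasurePreserving.id (volume : Measure ℝ)).prod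
    (volume_preserving_symm_measurableEquiv_toLp (Fin n))
  have h₂ := (volume_preserving_piFinSuccAbove (fun _ : Fin (n + 1) => ℝ) 0).symm
  have h₃ := (volume_preserving_symm_measurableEquiv_toLp (Fin (n + 1))).symm
  exact (h₃.comp h₂).comp h₁

theorem consMeasurableEquiv_apply_zero {n : ℕ} (p : ℝ × EuclideanSpace ℝ (Fin n)) :
    consMeasurableEquiv n p 0 = p.1 := by
  simp [consMeasurableEquiv, MeasurableEquiv.piFinSuccAbove, MeasurableEquiv.prodCongr]

theorem norm_consMeasurableEquiv {n : ℕ} (p : ℝ × EuclideanSpace ℝ (Fin n)) :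
    ‖consMeasurableEquiv n p‖ = √(p.1 ^ 2 + ‖p.2‖ ^ 2) := by
  rw [EuclideanSpace.norm_eq, EuclideanSpace.norm_eq, Real.sq_sqrt (by positivity)]
  simp [consMeasurableEquiv, MeasurableEquiv.piFinSuccAbove, MeasurableEquiv.prodCongr,
    Fin.sum_univ_succ]

end EuclideanSpace

local notation "ℝ³" => EuclideanSpace ℝ (Fin 3)

theorem lintegral_comp_coord_div_norm_mul {h ψ : ℝ → ℝ≥0∞} (hh : Measurable h)
    (hψ : Measurable ψ) :
    ∫⁻ x : ℝ³, h (x 0 / ‖x‖) * ψ ‖x‖ =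
      (volume : Measure (EuclideanSpace ℝ (Fin 2))).toSphere univ *
        ((∫⁻ s in Ioo (-1) 1, h s) * ∫⁻ ρ in Ioi 0, ENNReal.ofReal (ρ ^ 2) * ψ ρ) := by
  set σ := (volume : Measure (EuclideanSpace ℝ (Fin 2))).toSphere univ
  have hF : ∀ t : ℝ, Measurable fun r => h (t / √(t ^ 2 + r ^ 2)) * ψ √(t ^ 2 + r ^ 2) :=
    fun t => by fun_prop
  calc ∫⁻ x : ℝ³, h (x 0 / ‖x‖) * ψ ‖x‖
      = ∫⁻ t, ∫⁻ y : EuclideanSpace ℝ (Fin 2),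
          h (t / √(t ^ 2 + ‖y‖ ^ 2)) * ψ √(t ^ 2 + ‖y‖ ^ 2) := by
        rw [← (EuclideanSpace.measurePreserving_consMeasurableEquiv 2).lintegral_comp_emb
          (MeasurableEquiv.measurableEmbedding _), volume_eq_prod]
        simp only [EuclideanSpace.consMeasurableEquiv_apply_zero,
          EuclideanSpace.norm_consMeasurableEquiv]
        exact lintegral_prod _ (by fun_prop)
    _ = ∫⁻ t, σ * ∫⁻ ρ in Ioi |t|, ENNReal.ofReal ρ * (h (t / ρ) * ψ ρ) := by
        refine lintegral_congr fun t => ?_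
        rw [lintegral_fun_norm_addHaar _ (hF t), finrank_euclideanSpace_fin]
        simp only [Nat.add_one_sub_one, pow_one]
        rw [lintegral_Ioi_comp_sqrt_sq_add_sq t fun ρ => h (t / ρ) * ψ ρ]
    _ = σ * ∫⁻ ρ in Ioi 0, ∫⁻ t in Ioo (-ρ) ρ, ENNReal.ofReal ρ * (h (t / ρ) * ψ ρ) := by
        rw [lintegral_const_mul' _ _ (measure_ne_top _ _), lintegral_lintegral_Ioi_abs_swap]
        fun_prop
    _ = σ * ∫⁻ ρ in Ioi 0, (∫⁻ s in Ioo (-1) 1, h s) * (ENNReal.ofReal (ρ ^ 2) * ψ ρ) := by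
        congr 1
        refine setLIntegral_congr_fun measurableSet_Ioi fun ρ (hρ : 0 < ρ) => ?_
        simp_rw [mul_comm (h _), ← mul_assoc]
        rw [lintegral_const_mul _ (by fun_prop), lintegral_Ioo_comp_div hρ, sq,
          ENNReal.ofReal_mul hρ.le]
        ring
    _ = _ := by rw [lintegral_const_mul _ (by fun_prop)]

theorem EuclideanSpace.exists_orthonormalBasis_apply_eq {n : ℕ} {u : EuclideanSpace ℝ (Fin n)}
    (hu : ‖u‖ = 1) (i : Fin n) : ∃ β : OrthonormalBasis (Fin n) ℝ (EuclideanSpace ℝ (Fin n)),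
      β i = u := by
  have horth : Orthonormal ℝ (({i} : Set (Fin n)).domRestrict fun _ => u) :=
    ⟨fun _ => hu, fun j k hjk => absurd (Subsingleton.elim j k) hjk⟩
  obtain ⟨β, hβ⟩ := horth.exists_orthonormalBasis_extension_of_card_eq (by simp)
  exact ⟨β, hβ i rfl⟩

theorem lintegral_comp_inner_div_norm_mul {u : ℝ³} (hu : ‖u‖ = 1) {h ψ : ℝ → ℝ≥0∞}
    (hh : Measurable h) (hψ : Measurable ψ) :
    ∫⁻ x : ℝ³, h (⟪u, x⟫ / ‖x‖) * ψ ‖x‖ =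
      (volume : Measure (EuclideanSpace ℝ (Fin 2))).toSphere univ *
        ((∫⁻ s in Ioo (-1) 1, h s) * ∫⁻ ρ in Ioi 0, ENNReal.ofReal (ρ ^ 2) * ψ ρ) := by
  obtain ⟨β, hβ⟩ := EuclideanSpace.exists_orthonormalBasis_apply_eq hu 0
  rw [← lintegral_comp_coord_div_norm_mul hh hψ,
    ← β.measurePreserving_repr.lintegral_comp_emb β.repr.toMeasurableEquiv.measurableEmbedding
      fun y => h (y 0 / ‖y‖) * ψ ‖y‖]
  simp only [OrthonormalBasis.repr_apply_apply, hβ, LinearIsometryEquiv.norm_map]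

/-- Archimedes' hat-box theorem. -/
theorem lintegral_toSphere_comp_inner {u : ℝ³} (hu : ‖u‖ = 1) {h : ℝ → ℝ≥0∞}
    (hh : Measurable h) (hh_ne_top : ∀ s, h s ≠ ∞) :
    ∫⁻ θ, h ⟪u, θ⟫ ∂(volume : Measure ℝ³).toSphere =
      (volume : Measure (EuclideanSpace ℝ (Fin 2))).toSphere univ *
        ∫⁻ s in Ioo (-1) 1, h s := by
  set ψ : ℝ → ℝ≥0∞ := (Iio 1).indicator 1
  have hψ : Measurable ψ := measurable_one.indicator measurableSet_Iio
  have hR : ∫⁻ r, ψ r.1 ∂volumeIoiPow 2 = ENNReal.ofReal (1 / 3) := by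
    have : (fun r : Ioi (0 : ℝ) => ψ r.1) = (Iio ⟨1, mem_Ioi.mpr one_pos⟩).indicator 1 := by
      funext r
      simp only [ψ, indicator, mem_Iio, ← Subtype.coe_lt_coe]
      rfl
    rw [this, lintegral_indicator_one measurableSet_Iio, volumeIoiPow_apply_Iio]
    norm_num
  have hpolar := lintegral_eq_lintegral_toSphere_mul_lintegral_volumeIoiPow volume
    (W := fun x : ℝ³ => h (⟪u, x⟫ / ‖x‖) * ψ ‖x‖) (by fun_prop) (H := fun θ => h ⟪u, θ⟫)
    (by fun_prop) (fun θ => hh_ne_top _) (fun r => ψ r.1) fun θ r => by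
      have hθ : ‖(θ : ℝ³)‖ = 1 := mem_sphere_zero_iff_norm.mp θ.2
      rw [inner_smul_div_norm_smul _ _ r.2.out, hθ, div_one, norm_smul, hθ, mul_one,
        norm_of_nonneg r.2.out.le]
  rw [lintegral_comp_inner_div_norm_mul hu hh hψ, ← lintegral_volumeIoiPow hψ,
    finrank_euclideanSpace_fin, hR] at hpolar
  rw [← ENNReal.mul_left_inj (ENNReal.ofReal_pos.mpr (by norm_num : (0 : ℝ) < 1 / 3)).ne'
    ENNReal.ofReal_ne_top, ← hpolar, mul_assoc]

theorem two_mul_lintegral_radial_mul_comp_inner_div_norm {u : ℝ³} (hu : ‖u‖ = 1)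
    {w : ℝ → ℝ≥0∞} (hw : AEMeasurable fun x : ℝ³ => w ‖x‖) {h : ℝ → ℝ≥0∞}
    (hh : Measurable h) (hh_ne_top : ∀ s, h s ≠ ∞) :
    2 * ∫⁻ x : ℝ³, w ‖x‖ * h (⟪u, x⟫ / ‖x‖) =
      (∫⁻ s in Ioo (-1) 1, h s) * ∫⁻ x : ℝ³, w ‖x‖ := by
  have hpolar := fun (g : ℝ → ℝ≥0∞) (hg : Measurable g) (hg_ne_top : ∀ s, g s ≠ ∞) =>
    lintegral_eq_lintegral_toSphere_mul_lintegral_volumeIoiPow volume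
      (W := fun x : ℝ³ => w ‖x‖ * g (⟪u, x⟫ / ‖x‖)) (hw.mul (by fun_prop))
      (H := fun θ => g ⟪u, θ⟫) (by fun_prop) (fun θ => hg_ne_top _) (fun r => w r.1)
      fun θ r => by
        have hθ : ‖(θ : ℝ³)‖ = 1 := mem_sphere_zero_iff_norm.mp θ.2
        rw [inner_smul_div_norm_smul _ _ r.2.out, hθ, div_one, norm_smul, hθ, mul_one,
          norm_of_nonneg r.2.out.le, mul_comm]
  have hweight := hpolar h hh hh_ne_top
  have hradial := hpolar 1 measurable_one fun _ => ENNReal.one_ne_top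
  have hsphere := lintegral_toSphere_comp_inner hu measurable_one fun _ => ENNReal.one_ne_top
  simp only [Pi.one_apply, mul_one] at hradial hsphere
  rw [hweight, hradial, hsphere, lintegral_toSphere_comp_inner hu hh hh_ne_top, setLIntegral_one,
    Real.volume_Ioo]
  norm_num
  ring

theorem two_mul_integral_radial_mul_comp_inner_div_norm {u : ℝ³} (hu : ‖u‖ = 1) {w : ℝ → ℝ}
    (hw : AEStronglyMeasurable fun x : ℝ³ => w ‖x‖) (hw_nonneg : ∀ r, 0 ≤ w r) {g : ℝ → ℝ}
    (hg : Measurable g) (hg_nonneg : ∀ s ∈ Icc (-1 : ℝ) 1, 0 ≤ g s) :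
    2 * ∫ x : ℝ³, w ‖x‖ * g (⟪u, x⟫ / ‖x‖) = (∫ s in (-1)..1, g s) * ∫ x : ℝ³, w ‖x‖ := by
  have hlin := two_mul_lintegral_radial_mul_comp_inner_div_norm hu
    (w := fun r => ENNReal.ofReal (w r)) hw.aemeasurable.ennreal_ofReal hg.ennreal_ofReal
    fun _ => ENNReal.ofReal_ne_top
  simp_rw [← ENNReal.ofReal_mul (hw_nonneg _)] at hlin
  have hI : ∫ s in (-1)..1, g s = (∫⁻ s in Ioo (-1) 1, ENNReal.ofReal (g s)).toReal := by
    rw [intervalIntegral.integral_of_le (by norm_num), integral_Ioc_eq_integral_Ioo,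
      integral_eq_lintegral_of_nonneg_ae _ hg.aestronglyMeasurable]
    filter_upwards [ae_restrict_mem measurableSet_Ioo] with s hs
    exact hg_nonneg s (Ioo_subset_Icc_self hs)
  rw [integral_eq_lintegral_of_nonneg_ae (.of_forall fun x =>
      mul_nonneg (hw_nonneg _) (hg_nonneg _ (inner_div_norm_mem_Icc hu x)))
      (hw.mul (hg.comp (by fun_prop)).aestronglyMeasurable),
    integral_eq_lintegral_of_nonneg_ae (.of_forall fun x => hw_nonneg _) hw, hI,
    ← ENNReal.toReal_mul, ← hlin, ENNReal.toReal_mul]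
  norm_num

noncomputable def fieldEnergyWeight (b s : ℝ) : ℝ :=
  ((1 + b ^ 2) - (3 - b ^ 2) * (b * s) ^ 2) / (1 - (b * s) ^ 2) ^ 2

theorem measurable_fieldEnergyWeight (b : ℝ) : Measurable (fieldEnergyWeight b) := by
  unfold fieldEnergyWeight
  fun_prop

theorem fieldEnergyWeight_nonneg (b : ℝ) {s : ℝ} (hs : s ∈ Icc (-1 : ℝ) 1) :
    0 ≤ fieldEnergyWeight b s := by
  have hs2 : s ^ 2 ≤ 1 := sq_le_one_iff_abs_le_one s |>.mpr (abs_le.mpr hs)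
  have hbs : (b * s) ^ 2 ≤ b ^ 2 := by rw [mul_pow]; nlinarith [sq_nonneg b]
  refine div_nonneg ?_ (sq_nonneg _)
  nlinarith [sq_nonneg (1 - b ^ 2), sq_nonneg (b * s)]

theorem hasDerivAt_fieldEnergyWeight_primitive {b s : ℝ} (hb : b ≠ 0) (hbs : (b * s) ^ 2 < 1) :
    HasDerivAt (fun s => b⁻¹ * (log (1 + b * s) - log (1 - b * s)) - (1 - b ^ 2) * s /
      (1 - (b * s) ^ 2)) (fieldEnergyWeight b s) s := by
  have hplus : 0 < 1 + b * s := by nlinarith [sq_nonneg (b * s - 1)]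
  have hminus : 0 < 1 - b * s := by nlinarith [sq_nonneg (b * s + 1)]
  have hden : 1 - (b * s) ^ 2 ≠ 0 := by linarith
  have hlog₁ := ((hasDerivAt_id s).const_mul b |>.const_add 1).log hplus.ne'
  have hlog₂ := ((hasDerivAt_id s).const_mul b |>.const_sub 1).log hminus.ne'
  have hquot := ((hasDerivAt_id s).const_mul (1 - b ^ 2)).div
    (((hasDerivAt_id s).const_mul b).pow 2 |>.const_sub 1) hden
  refine ((hlog₁.sub hlog₂).const_mul b⁻¹ |>.sub hquot).congr_deriv ?_
  have hfactor : 1 - (b * s) ^ 2 = (1 + b * s) * (1 - b * s) := by ring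
  simp only [id, Pi.pow_apply, fieldEnergyWeight, hfactor]
  field_simp
  ring

theorem integral_fieldEnergyWeight {b : ℝ} (hb0 : 0 < b) (hb1 : b < 1) :
    ∫ s in (-1)..1, fieldEnergyWeight b s = 2 * (1 / b * log ((1 + b) / (1 - b)) - 1) := by
  have hbs : ∀ s ∈ uIcc (-1 : ℝ) 1, (b * s) ^ 2 < 1 := by
    intro s hs
    rw [uIcc_of_le (by norm_num), mem_Icc, ← abs_le] at hs
    rw [mul_pow]
    nlinarith [sq_le_one_iff_abs_le_one s |>.mpr hs, sq_nonneg s]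
  rw [intervalIntegral.integral_eq_sub_of_hasDerivAt
    (fun s hs => hasDerivAt_fieldEnergyWeight_primitive hb0.ne' (hbs s hs))]
  · rw [log_div (by linarith) (by linarith)]
    have : 1 - b ^ 2 ≠ 0 := by nlinarith
    field_simp
    ring_nf
  · refine ContinuousOn.intervalIntegrable fun s hs => ?_
    unfold fieldEnergyWeight
    exact ContinuousAt.continuousWithinAt (by fun_prop (disch := nlinarith [hbs s hs]))

theorem mul_inv_mul_eq_div_mul_fieldEnergyWeight {E : Type*} [NormedAddCommGroup E]
    [InnerProductSpace ℝ E] (a : ℝ) (v k : E) :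
    a * ((‖k‖ ^ 2 - ⟪k, v⟫ ^ 2) ^ 2)⁻¹ * ((1 + ‖v‖ ^ 2) * ‖k‖ ^ 2 - (3 - ‖v‖ ^ 2) * ⟪v, k⟫ ^ 2) =
      a / ‖k‖ ^ 2 * fieldEnergyWeight ‖v‖ (⟪‖v‖⁻¹ • v, k⟫ / ‖k‖) := by
  rcases eq_or_ne k 0 with rfl | hk
  · simp
  have hk' : ‖k‖ ≠ 0 := norm_ne_zero_iff.mpr hk
  have hcos : ‖v‖ * (⟪‖v‖⁻¹ • v, k⟫ / ‖k‖) = ⟪v, k⟫ / ‖k‖ := by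
    rcases eq_or_ne v 0 with rfl | hv
    · simp
    rw [real_inner_smul_left, mul_div_assoc', ← mul_assoc,
      mul_inv_cancel₀ (norm_ne_zero_iff.mpr hv), one_mul]
  rw [fieldEnergyWeight, hcos, real_inner_comm v k]
  have : ‖k‖ ^ 2 - ⟪v, k⟫ ^ 2 = ‖k‖ ^ 2 * (1 - (⟪v, k⟫ / ‖k‖) ^ 2) := by field_simp
  rw [this, mul_pow, mul_inv, div_pow]
  field_simp

theorem soliton_field_energy_formula_general
    (ρhat : EuclideanSpace ℝ (Fin 3) → ℝ)
    (hrad : ∃ f : ℝ → ℝ, ∀ k, ρhat k = f ‖k‖)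
    (m_e : ℝ)
    (hme : m_e = (1/2) * ∫ k : EuclideanSpace ℝ (Fin 3), (ρhat k)^2 / ‖k‖^2)
    (hint2 : Integrable fun k : EuclideanSpace ℝ (Fin 3) => (ρhat k)^2 / ‖k‖^2)
    (v : EuclideanSpace ℝ (Fin 3)) (hv0 : 0 < ‖v‖) (hv1 : ‖v‖ < 1) :
    (1/2) * (∫ k : EuclideanSpace ℝ (Fin 3),
        (ρhat k)^2 * ((‖k‖^2 - ⟪k, v⟫^2)^2)⁻¹
          * ((1 + ‖v‖^2) * ‖k‖^2 - (3 - ‖v‖^2) * ⟪v, k⟫^2))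
      = m_e * ((1 / ‖v‖) * Real.log ((1 + ‖v‖) / (1 - ‖v‖)) - 1) := by
  obtain ⟨f, hf⟩ := hrad
  simp only [hf] at hme hint2 ⊢
  simp_rw [mul_inv_mul_eq_div_mul_fieldEnergyWeight]
  have key := two_mul_integral_radial_mul_comp_inner_div_norm
    (norm_smul_inv_norm (𝕜 := ℝ) (norm_pos_iff.mp hv0)) (w := fun r => f r ^ 2 / r ^ 2)
    hint2.aestronglyMeasurable (fun r => by positivity) (measurable_fieldEnergyWeight ‖v‖)
    (fun s hs => fieldEnergyWeight_nonneg _ hs)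
  rw [integral_fieldEnergyWeight hv0 hv1] at key
  linear_combination (1 / 4) * key - (1 / ‖v‖ * log ((1 + ‖v‖) / (1 - ‖v‖)) - 1) * hme

/-- The field energy of the charge soliton at velocity `v`, `0 < |v| < 1`, equals
`m_e [ |v|⁻¹ log((1+|v|)/(1-|v|)) - 1 ]` where `m_e` is the electrostatic self-energy. -/
theorem soliton_field_energy_formula
    (ρhat : EuclideanSpace ℝ (Fin 3) → ℝ)
    (hrad : ∃ f : ℝ → ℝ, ∀ k, ρhat k = f ‖k‖)
    (m_e : ℝ)
    (hme : m_e = (1/2) * ∫ k : EuclideanSpace ℝ (Fin 3), (ρhat k)^2 / ‖k‖^2)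
    (hint2 : Integrable fun k : EuclideanSpace ℝ (Fin 3) => (ρhat k)^2 / ‖k‖^2)
    (v : EuclideanSpace ℝ (Fin 3)) (hv0 : 0 < ‖v‖) (hv1 : ‖v‖ < 1)
    (hint : Integrable fun k : EuclideanSpace ℝ (Fin 3) =>
      (ρhat k)^2 * ((‖k‖^2 - ⟪k, v⟫^2)^2)⁻¹
        * ((1 + ‖v‖^2) * ‖k‖^2 - (3 - ‖v‖^2) * ⟪v, k⟫^2)) :
    (1/2) * (∫ k : EuclideanSpace ℝ (Fin 3),
        (ρhat k)^2 * ((‖k‖^2 - ⟪k, v⟫^2)^2)⁻¹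
          * ((1 + ‖v‖^2) * ‖k‖^2 - (3 - ‖v‖^2) * ⟪v, k⟫^2))
      = m_e * ((1 / ‖v‖) * Real.log ((1 + ‖v‖) / (1 - ‖v‖)) - 1) :=
  soliton_field_energy_formula_general ρhat hrad m_e hme hint2 v hv0 hv1
end

section
/- The soliton energy and momentum satisfy the Hamiltonian relation v · (dP_s/dv) = ∇_v E_s(v) for all v with |v| < 1, equivalently P_s(v) = ∇_v T(v) and E_s(v) = P_s(v)·v - T(v) with T(v) = -m_b γ⁻¹ + m_e (1 - v²) |v|⁻¹ · (1/2) log((1+|v|)/(1-|v|)) (suitably normalized). -/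
/-!
Both `E_s` and `P_s` are radial: `E_s u = e ‖u‖` and `P_s u = p ‖u‖ • u`. At `v ≠ 0` with
`r = ‖v‖`, the chain rule gives `∇E_s(v) = (e'(r) / r) v` and `v · P_s'(v) = (p(r) + r p'(r)) v`,
so the Hamiltonian relation is the one-variable identity `r (p + r p') = e'`, i.e.
`r q' = e'` for the scalar momentum `q(r) = r p(r)`. For the soliton this is a rational identity
in `r`, `γ` and `log ((1 + r) / (1 - r))`, because `γ' = r γ / (1 - r²)` and
`(log ((1 + r) / (1 - r)))' = 2 / (1 - r²)`.
-/

open Topology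
open scoped RealInnerProductSpace

section Radial

variable {F : Type*} [NormedAddCommGroup F] [InnerProductSpace ℝ F] {v : F}

theorem hasFDerivAt_norm_of_ne_zero (hv : v ≠ 0) :
    HasFDerivAt (‖·‖) (‖v‖⁻¹ • innerSL ℝ v) v := by
  have h := (Real.hasDerivAt_sqrt (by positivity)).comp_hasFDerivAt v
    (hasStrictFDerivAt_norm_sq v).hasFDerivAt
  have hsqrt : ((√·) ∘ fun u : F => ‖u‖ ^ 2) = (‖·‖) :=
    funext fun u => Real.sqrt_sq (norm_nonneg u)
  rw [hsqrt, Real.sqrt_sq (norm_nonneg v)] at h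
  refine h.congr_fderiv ?_
  ext w
  simp only [smul_apply, coe_innerSL_apply, nsmul_eq_mul, Nat.cast_ofNat,
    smul_eq_mul]
  field_simp

variable {f p : ℝ → ℝ} {f' p' : ℝ}

theorem HasDerivAt.comp_norm (hf : HasDerivAt f f' ‖v‖) (hv : v ≠ 0) :
    HasFDerivAt (fun u => f ‖u‖) ((f' / ‖v‖) • innerSL ℝ v) v := by
  refine (hf.comp_hasFDerivAt v (hasFDerivAt_norm_of_ne_zero hv)).congr_fderiv ?_
  ext w
  simp only [smul_apply, coe_innerSL_apply, smul_eq_mul]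
  ring

theorem HasDerivAt.inner_smul_comp_norm (hp : HasDerivAt p p' ‖v‖) (hv : v ≠ 0) :
    HasFDerivAt (fun u => ⟪v, p ‖u‖ • u⟫) ((p ‖v‖ + ‖v‖ * p') • innerSL ℝ v) v := by
  have h := (hp.comp_norm hv).mul (innerSL ℝ v).hasFDerivAt
  simp only [innerSL_apply_apply] at h
  simp only [real_inner_smul_right]
  refine h.congr_fderiv ?_
  ext w
  simp only [add_apply, smul_apply, coe_innerSL_apply,
    real_inner_self_eq_norm_sq, smul_eq_mul]
  field_simp

theorem fderiv_inner_smul_comp_norm_eq (hv : v ≠ 0) (hf : HasDerivAt f f' ‖v‖)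
    (hp : HasDerivAt p p' ‖v‖) (h : ‖v‖ * (p ‖v‖ + ‖v‖ * p') = f') :
    fderiv ℝ (fun u => ⟪v, p ‖u‖ • u⟫) v = fderiv ℝ (fun u => f ‖u‖) v := by
  rw [(hp.inner_smul_comp_norm hv).fderiv, (hf.comp_norm hv).fderiv, ← h,
    mul_div_cancel_left₀ _ (norm_ne_zero_iff.mpr hv)]

end Radial

section Soliton

open Real

variable {m_b m_e r : ℝ}

theorem one_sub_sq_pos_of_abs_lt_one (hr : |r| < 1) : 0 < 1 - r ^ 2 :=
  sub_pos.mpr ((sq_lt_one_iff_abs_lt_one r).mpr hr)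

theorem hasDerivAt_inv_sqrt_one_sub_sq (hr : |r| < 1) :
    HasDerivAt (fun t => (√(1 - t ^ 2))⁻¹) (r / (1 - r ^ 2) * (√(1 - r ^ 2))⁻¹) r := by
  have h := one_sub_sq_pos_of_abs_lt_one hr
  have hs : 0 < √(1 - r ^ 2) := sqrt_pos.mpr h
  refine ((((hasDerivAt_pow 2 r).const_sub 1).sqrt h.ne').inv hs.ne').congr_deriv ?_
  field_simp
  rw [sq_sqrt h.le]
  norm_num

theorem hasDerivAt_log_one_add_div_one_sub (hr : |r| < 1) :
    HasDerivAt (fun t => log ((1 + t) / (1 - t))) (2 / (1 - r ^ 2)) r := by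
  obtain ⟨hr₁, hr₂⟩ := abs_lt.mp hr
  have h₁ : 1 - r ≠ 0 := by linarith
  have h₂ : (1 + r) / (1 - r) ≠ 0 := div_ne_zero (by linarith) h₁
  refine ((((hasDerivAt_id r).const_add 1).div ((hasDerivAt_id r).const_sub 1) h₁).log
    h₂).congr_deriv ?_
  simp only [Pi.div_apply, id]
  rw [show 1 - r ^ 2 = (1 - r) * (1 + r) by ring]
  field_simp
  ring

noncomputable def solitonEnergy (m_b m_e r : ℝ) : ℝ :=
  m_b * (√(1 - r ^ 2))⁻¹ + m_e * ((1 / r) * log ((1 + r) / (1 - r)) - 1)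

/-- `P_s u = solitonMomentumCoeff m_b m_e ‖u‖ • u`. -/
noncomputable def solitonMomentumCoeff (m_b m_e r : ℝ) : ℝ :=
  m_b * (√(1 - r ^ 2))⁻¹
    + m_e * (r ^ 2)⁻¹ * ((1 + r ^ 2) / (2 * r) * log ((1 + r) / (1 - r)) - 1)

theorem hasDerivAt_solitonEnergy (hr₀ : r ≠ 0) (hr : |r| < 1) :
    HasDerivAt (solitonEnergy m_b m_e)
      (m_b * (r / (1 - r ^ 2) * (√(1 - r ^ 2))⁻¹)
        + m_e * (2 / (r * (1 - r ^ 2)) - log ((1 + r) / (1 - r)) / r ^ 2)) r := by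
  unfold solitonEnergy
  simp only [one_div]
  refine (((hasDerivAt_inv_sqrt_one_sub_sq hr).const_mul m_b).add
    ((((hasDerivAt_inv hr₀).mul (hasDerivAt_log_one_add_div_one_sub hr)).sub_const 1).const_mul
      m_e)).congr_deriv ?_
  have h := (one_sub_sq_pos_of_abs_lt_one hr).ne'
  field_simp
  ring

theorem hasDerivAt_solitonMomentumCoeff (hr₀ : r ≠ 0) (hr : |r| < 1) :
    HasDerivAt (solitonMomentumCoeff m_b m_e)
      (m_b * (r / (1 - r ^ 2) * (√(1 - r ^ 2))⁻¹)
        + m_e * ((1 + r ^ 2) / (r ^ 3 * (1 - r ^ 2)) + 2 / r ^ 3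
          - (3 + r ^ 2) * log ((1 + r) / (1 - r)) / (2 * r ^ 4))) r := by
  have hq := ((hasDerivAt_pow 2 r).const_add 1).div ((hasDerivAt_id r).const_mul 2)
    (by simpa using hr₀)
  refine (((hasDerivAt_inv_sqrt_one_sub_sq hr).const_mul m_b).add
    ((((hasDerivAt_pow 2 r).inv (by positivity)).const_mul m_e).mul
      ((hq.mul (hasDerivAt_log_one_add_div_one_sub hr)).sub_const 1))).congr_deriv ?_
  have h := (one_sub_sq_pos_of_abs_lt_one hr).ne'
  simp only [id, Nat.cast_ofNat, Pi.mul_apply, Pi.inv_apply, Pi.div_apply]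
  field_simp
  ring

theorem mul_solitonMomentumCoeff_add_mul_deriv_eq_deriv_solitonEnergy (hr₀ : r ≠ 0)
    (hr : |r| < 1) :
    r * (solitonMomentumCoeff m_b m_e r + r * deriv (solitonMomentumCoeff m_b m_e) r) =
      deriv (solitonEnergy m_b m_e) r := by
  have h := (one_sub_sq_pos_of_abs_lt_one hr).ne'
  rw [(hasDerivAt_solitonMomentumCoeff hr₀ hr).deriv, (hasDerivAt_solitonEnergy hr₀ hr).deriv,
    solitonMomentumCoeff]
  field_simp
  ring

end Soliton

theorem soliton_energy_momentum_hamiltonian_relation_general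
    (m_b m_e : ℝ)
    (Es : EuclideanSpace ℝ (Fin 3) → ℝ)
    (Ps : EuclideanSpace ℝ (Fin 3) → EuclideanSpace ℝ (Fin 3))
    (hEs : ∀ u : EuclideanSpace ℝ (Fin 3), u ≠ 0 → ‖u‖ < 1 →
      Es u = m_b * (Real.sqrt (1 - ‖u‖^2))⁻¹
        + m_e * ((1 / ‖u‖) * Real.log ((1 + ‖u‖) / (1 - ‖u‖)) - 1))
    (hPs : ∀ u : EuclideanSpace ℝ (Fin 3), u ≠ 0 → ‖u‖ < 1 →
      Ps u = (m_b * (Real.sqrt (1 - ‖u‖^2))⁻¹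
        + m_e * (‖u‖^2)⁻¹ *
          ((1 + ‖u‖^2) / (2 * ‖u‖) * Real.log ((1 + ‖u‖) / (1 - ‖u‖)) - 1)) • u)
    (v : EuclideanSpace ℝ (Fin 3)) (hv0 : v ≠ 0) (hv1 : ‖v‖ < 1) :
    ∀ w : EuclideanSpace ℝ (Fin 3),
      fderiv ℝ (fun u => ⟪v, Ps u⟫) v w = fderiv ℝ Es v w := by
  intro w
  have hr₀ : ‖v‖ ≠ 0 := norm_ne_zero_iff.mpr hv0
  have hr : |‖v‖| < 1 := by rwa [abs_norm]
  have hball : ∀ᶠ u in 𝓝 v, u ≠ 0 ∧ ‖u‖ < 1 :=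
    (eventually_ne_nhds hv0).and ((continuous_norm.tendsto v).eventually_lt_const hv1)
  have hE : Es =ᶠ[𝓝 v] fun u => solitonEnergy m_b m_e ‖u‖ :=
    hball.mono fun u hu => hEs u hu.1 hu.2
  have hP : (fun u => ⟪v, Ps u⟫) =ᶠ[𝓝 v] fun u => ⟪v, solitonMomentumCoeff m_b m_e ‖u‖ • u⟫ :=
    hball.mono fun u hu => congrArg (inner ℝ v) (hPs u hu.1 hu.2)
  rw [hP.fderiv_eq, hE.fderiv_eq, fderiv_inner_smul_comp_norm_eq hv0
    (hasDerivAt_solitonEnergy hr₀ hr).differentiableAt.hasDerivAt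
    (hasDerivAt_solitonMomentumCoeff hr₀ hr).differentiableAt.hasDerivAt
    (mul_solitonMomentumCoeff_add_mul_deriv_eq_deriv_solitonEnergy hr₀ hr)]

/-- The Hamiltonian relation `v · (dP_s/dv) = ∇_v E_s(v)` between soliton energy
and momentum: for every direction `w`, the derivative of `u ↦ ⟪v, P_s u⟫` at `v`
in direction `w` agrees with the derivative of `E_s` at `v` in direction `w`. -/
theorem soliton_energy_momentum_hamiltonian_relation
    (m_b m_e : ℝ) (hmb : 0 < m_b) (hme : 0 < m_e)
    (Es : EuclideanSpace ℝ (Fin 3) → ℝ)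
    (Ps : EuclideanSpace ℝ (Fin 3) → EuclideanSpace ℝ (Fin 3))
    (hEs : ∀ u : EuclideanSpace ℝ (Fin 3), u ≠ 0 → ‖u‖ < 1 →
      Es u = m_b * (Real.sqrt (1 - ‖u‖^2))⁻¹
        + m_e * ((1 / ‖u‖) * Real.log ((1 + ‖u‖) / (1 - ‖u‖)) - 1))
    (hPs : ∀ u : EuclideanSpace ℝ (Fin 3), u ≠ 0 → ‖u‖ < 1 →
      Ps u = (m_b * (Real.sqrt (1 - ‖u‖^2))⁻¹
        + m_e * (‖u‖^2)⁻¹ *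
          ((1 + ‖u‖^2) / (2 * ‖u‖) * Real.log ((1 + ‖u‖) / (1 - ‖u‖)) - 1)) • u)
    (v : EuclideanSpace ℝ (Fin 3)) (hv0 : v ≠ 0) (hv1 : ‖v‖ < 1) :
    ∀ w : EuclideanSpace ℝ (Fin 3),
      fderiv ℝ (fun u => ⟪v, Ps u⟫) v w = fderiv ℝ Es v w :=
  soliton_energy_momentum_hamiltonian_relation_general m_b m_e Es Ps hEs hPs v hv0 hv1
end

section
/- The map v ↦ P_s(v) from the open unit ball {v ∈ ℝ³ : |v| < 1} to ℝ³ is a bijection, i.e., for every P ∈ ℝ³ there exists a unique v with |v| < 1 such that P_s(v) = P. -/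
/-
Write `φ u = u * g u = m_b * u / √(1 - u²) + m_e * ψ u`. Expanding
`log ((1 + u) / (1 - u)) = 2 ∑ u^(2k+1) / (2k+1)` gives `ψ u = u + ∑ (1 + u²) u^(2k+1) / (2k+3)`,
a sum of increasing functions squeezed between `u` and `u + u / (1 - u²)`. Hence `φ` is strictly
increasing on `[0, 1)` with `φ 0 = 0` (so `g > 0`), continuous also at `0`, and the bound
`ψ u ≥ -log (1 - u) - 1 / u` makes it tend to `∞` at `1`; thus `φ` maps `[0, 1)` bijectively onto
`[0, ∞)`. As `v ↦ g ‖v‖ • v` keeps directions and sends lengths `r` to `φ r`, it is a bijection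
of the unit ball onto the whole space.
-/

open Real Set Filter Topology

theorem existsUnique_norm_lt_one_smul_eq {E : Type*} [NormedAddCommGroup E] [NormedSpace ℝ E]
    {g : ℝ → ℝ} (hpos : ∀ u ∈ Ioo 0 1, 0 < g u) (hinj : InjOn (fun u => u * g u) (Ico 0 1))
    (hsurj : SurjOn (fun u => u * g u) (Ico 0 1) (Ici 0)) (P : E) :
    ∃! v : E, ‖v‖ < 1 ∧ g ‖v‖ • v = P := by
  have norm_smul_self : ∀ w : E, ‖w‖ < 1 → ‖g ‖w‖ • w‖ = ‖w‖ * g ‖w‖ := by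
    intro w hw
    rcases (norm_nonneg w).eq_or_lt with hw0 | hw0
    · simp [norm_eq_zero.mp hw0.symm]
    · rw [norm_smul, norm_of_nonneg (hpos _ ⟨hw0, hw⟩).le, mul_comm]
  obtain ⟨u, hu, huP⟩ := hsurj (mem_Ici.2 (norm_nonneg P))
  have norm_eq : ∀ w : E, ‖w‖ < 1 → g ‖w‖ • w = P → ‖w‖ = u := fun w hw hwP =>
    hinj ⟨norm_nonneg w, hw⟩ hu (by simp only [← norm_smul_self w hw, hwP, huP])
  rcases hu.1.eq_or_lt with rfl | hu0
  · have hP : P = 0 := by simpa using huP.symm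
    exact ⟨0, by simp [hP], fun w hw => norm_eq_zero.mp (norm_eq w hw.1 hw.2)⟩
  · have hgu : 0 < g u := hpos u ⟨hu0, hu.2⟩
    have hv : ‖(g u)⁻¹ • P‖ = u := by
      rw [norm_smul, norm_inv, norm_of_nonneg hgu.le, ← huP]
      field_simp
    refine ⟨(g u)⁻¹ • P, ⟨hv.trans_lt hu.2, by rw [hv, smul_inv_smul₀ hgu.ne']⟩, ?_⟩
    rintro w ⟨hw, hwP⟩
    rw [← hwP, norm_eq w hw hwP, inv_smul_smul₀ hgu.ne']

theorem surjOn_Ico_of_tendsto_atTop {α β : Type*} [ConditionallyCompleteLinearOrder α]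
    [TopologicalSpace α] [OrderTopology α] [DenselyOrdered α]
    [LinearOrder β] [TopologicalSpace β] [OrderClosedTopology β]
    {f : α → β} {a b : α} (hab : a < b) (hf : ContinuousOn f (Ico a b))
    (htop : Tendsto f (𝓝[<] b) atTop) : SurjOn f (Ico a b) (Ici (f a)) := by
  have := nhdsLT_neBot_of_exists_lt ⟨a, hab⟩
  intro y hy
  obtain ⟨c, hyc, hc⟩ := ((htop.eventually_ge_atTop y).and (Ico_mem_nhdsLT hab)).exists
  exact hf.surjOn_Icc (left_mem_Ico.2 hab) hc ⟨hy, hyc⟩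

/-- At `u = 0` division by zero gives `abrahamMomentum 0 = 0`, the value of the continuous
extension. -/
noncomputable def abrahamMomentum (u : ℝ) : ℝ :=
  (1 + u ^ 2) / (2 * u ^ 2) * log ((1 + u) / (1 - u)) - 1 / u

theorem hasSum_abrahamMomentum_sub {u : ℝ} (hu : |u| < 1) :
    HasSum (fun k : ℕ => (1 + u ^ 2) * u ^ (2 * k + 1) / (2 * k + 3))
      (abrahamMomentum u - u) := by
  rcases eq_or_ne u 0 with rfl | hu0
  · simp [abrahamMomentum, hasSum_zero]
  have h1p : 1 + u ≠ 0 := by grind [abs_lt]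
  have h1m : 1 - u ≠ 0 := by grind [abs_lt]
  have hlog := ((hasSum_nat_add_iff' 1).mpr (hasSum_log_sub_log_of_abs_lt_one hu)).mul_left
    ((1 + u ^ 2) / (2 * u ^ 2))
  have hsum : abrahamMomentum u - u = (1 + u ^ 2) / (2 * u ^ 2) *
      (log (1 + u) - log (1 - u) - 2 * u) := by
    rw [abrahamMomentum, log_div h1p h1m]
    field_simp
    ring
  rw [hsum]
  refine (by simpa using hlog : HasSum _ _).congr_fun fun k => ?_
  field_simp
  ring

theorem le_abrahamMomentum {u : ℝ} (h0 : 0 ≤ u) (h1 : u < 1) : u ≤ abrahamMomentum u := by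
  have := (hasSum_abrahamMomentum_sub (abs_lt.2 ⟨by linarith, h1⟩)).nonneg fun k => by positivity
  linarith

theorem abrahamMomentum_le {u : ℝ} (h0 : 0 ≤ u) (h1 : u < 1) :
    abrahamMomentum u ≤ u + u / (1 - u ^ 2) := by
  have hu2 : u ^ 2 < 1 := by nlinarith
  have hgeom : HasSum (fun k : ℕ => u ^ (2 * k + 1)) (u / (1 - u ^ 2)) := by
    rw [div_eq_mul_inv]
    exact ((hasSum_geometric_of_lt_one (sq_nonneg u) hu2).mul_left u).congr_fun fun k => by ring
  have := hasSum_le (fun k => ?_) (hasSum_abrahamMomentum_sub (abs_lt.2 ⟨by linarith, h1⟩)) hgeom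
  · linarith
  · rw [div_le_iff₀ (by positivity), mul_comm (u ^ _)]
    exact mul_le_mul_of_nonneg_right (by nlinarith [k.cast_nonneg (α := ℝ)]) (by positivity)

theorem strictMonoOn_abrahamMomentum : StrictMonoOn abrahamMomentum (Ico 0 1) := by
  intro u hu v hv huv
  have hterm : ∀ k : ℕ, (1 + u ^ 2) * u ^ (2 * k + 1) / (2 * k + 3) ≤
      (1 + v ^ 2) * v ^ (2 * k + 1) / (2 * k + 3) := fun k => by
    have := hu.1
    gcongr
  have := hasSum_le hterm (hasSum_abrahamMomentum_sub (abs_lt.2 ⟨by linarith [hu.1], hu.2⟩))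
    (hasSum_abrahamMomentum_sub (abs_lt.2 ⟨by linarith [hv.1], hv.2⟩))
  linarith

theorem continuousOn_abrahamMomentum : ContinuousOn abrahamMomentum (Ico 0 1) := by
  intro x hx
  rcases hx.1.eq_or_lt with rfl | hx0
  · have hupper : Tendsto (fun u : ℝ => u + u / (1 - u ^ 2)) (𝓝[Ico 0 1] 0) (𝓝 0) := by
      have : ContinuousAt (fun u : ℝ => u + u / (1 - u ^ 2)) 0 := by fun_prop (disch := norm_num)
      simpa using this.tendsto.mono_left nhdsWithin_le_nhds
    have hmem : Ico (0 : ℝ) 1 ∈ 𝓝[Ico 0 1] 0 := self_mem_nhdsWithin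
    have hψ0 : abrahamMomentum 0 = 0 := by simp [abrahamMomentum]
    rw [ContinuousWithinAt, hψ0]
    refine tendsto_of_tendsto_of_tendsto_of_le_of_le' (tendsto_id.mono_left nhdsWithin_le_nhds)
      hupper ?_ ?_
    · filter_upwards [hmem] with u hu using le_abrahamMomentum hu.1 hu.2
    · filter_upwards [hmem] with u hu using abrahamMomentum_le hu.1 hu.2
  · have : ContinuousAt abrahamMomentum x := by
      unfold abrahamMomentum
      have : 1 - x ≠ 0 := by linarith [hx.2]
      fun_prop (disch := first | positivity | assumption)
    exact this.continuousWithinAt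

theorem neg_log_one_sub_sub_one_div_le_abrahamMomentum {u : ℝ} (h0 : 0 < u) (h1 : u < 1) :
    -log (1 - u) - 1 / u ≤ abrahamMomentum u := by
  have hlog : -log (1 - u) ≤ log ((1 + u) / (1 - u)) := by
    rw [log_div (by linarith) (by linarith)]
    linarith [log_nonneg (by linarith : (1 : ℝ) ≤ 1 + u)]
  have hlog0 : 0 ≤ -log (1 - u) := neg_nonneg.2 (log_nonpos (by linarith) (by linarith))
  have hcoef : 1 ≤ (1 + u ^ 2) / (2 * u ^ 2) := by
    rw [le_div_iff₀ (by positivity)]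
    nlinarith
  unfold abrahamMomentum
  gcongr
  calc -log (1 - u) ≤ log ((1 + u) / (1 - u)) := hlog
    _ ≤ _ := le_mul_of_one_le_left (hlog0.trans hlog) hcoef

theorem tendsto_abrahamMomentum_atTop : Tendsto abrahamMomentum (𝓝[<] 1) atTop := by
  have hsub : Tendsto (fun u : ℝ => 1 - u) (𝓝[<] 1) (𝓝[>] 0) := by
    have hmaps : MapsTo (fun u : ℝ => 1 - u) (Iio 1) (Ioi 0) := fun _ hu =>
      sub_pos.2 (mem_Iio.1 hu)
    simpa using
      ((continuous_sub_left (1 : ℝ)).continuousWithinAt (x := 1)).tendsto_nhdsWithin hmaps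
  have hinv : Tendsto (fun u : ℝ => -(1 / u)) (𝓝[<] 1) (𝓝 (-1)) := by
    have : ContinuousAt (fun u : ℝ => -(1 / u)) 1 := by fun_prop (disch := norm_num)
    simpa using this.tendsto.mono_left nhdsWithin_le_nhds
  have hlower : Tendsto (fun u => -log (1 - u) + -(1 / u)) (𝓝[<] 1) atTop :=
    (tendsto_neg_atBot_atTop.comp (tendsto_log_nhdsGT_zero.comp hsub)).atTop_add hinv
  refine tendsto_atTop_mono' _ ?_ hlower
  filter_upwards [Ioo_mem_nhdsLT zero_lt_one] with u hu
  simpa [sub_eq_add_neg] using neg_log_one_sub_sub_one_div_le_abrahamMomentum hu.1 hu.2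

noncomputable def solitonMomentum (m_b m_e u : ℝ) : ℝ :=
  m_b * (u / √(1 - u ^ 2)) + m_e * abrahamMomentum u

section solitonMomentum

variable {m_b m_e : ℝ}

@[simp]
theorem solitonMomentum_zero : solitonMomentum m_b m_e 0 = 0 := by
  simp [solitonMomentum, abrahamMomentum]

theorem strictMonoOn_solitonMomentum (hmb : 0 ≤ m_b) (hme : 0 < m_e) :
    StrictMonoOn (solitonMomentum m_b m_e) (Ico 0 1) := by
  intro u hu v hv huv
  have hv2 : 0 < 1 - v ^ 2 := by nlinarith [hv.1, hv.2]
  have hrel : u / √(1 - u ^ 2) ≤ v / √(1 - v ^ 2) := by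
    have := hu.1
    have := hv.1
    gcongr
  exact add_lt_add_of_le_of_lt (mul_le_mul_of_nonneg_left hrel hmb)
    (mul_lt_mul_of_pos_left (strictMonoOn_abrahamMomentum hu hv huv) hme)

theorem continuousOn_solitonMomentum : ContinuousOn (solitonMomentum m_b m_e) (Ico 0 1) := by
  have hsqrt : ∀ x ∈ Ico (0 : ℝ) 1, √(1 - x ^ 2) ≠ 0 := fun x hx =>
    (sqrt_pos.2 (by nlinarith [hx.1, hx.2])).ne'
  have := continuousOn_abrahamMomentum
  unfold solitonMomentum
  fun_prop (disch := assumption)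

theorem tendsto_solitonMomentum_atTop (hmb : 0 ≤ m_b) (hme : 0 < m_e) :
    Tendsto (solitonMomentum m_b m_e) (𝓝[<] 1) atTop := by
  refine tendsto_atTop_mono' _ ?_ (tendsto_abrahamMomentum_atTop.const_mul_atTop hme)
  filter_upwards [Ico_mem_nhdsLT zero_lt_one] with u hu
  have : 0 ≤ m_b * (u / √(1 - u ^ 2)) := mul_nonneg hmb (div_nonneg hu.1 (sqrt_nonneg _))
  simp only [solitonMomentum]
  linarith

end solitonMomentum

theorem soliton_momentum_bijective_general
    (m_b m_e : ℝ) (hmb : 0 ≤ m_b) (hme : 0 < m_e)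
    (g : ℝ → ℝ)
    (hg : ∀ u : ℝ, 0 < u → u < 1 →
      g u = m_b * (Real.sqrt (1 - u^2))⁻¹
        + m_e * (u^2)⁻¹ * ((1 + u^2) / (2 * u) * Real.log ((1 + u) / (1 - u)) - 1))
    (Ps : EuclideanSpace ℝ (Fin 3) → EuclideanSpace ℝ (Fin 3))
    (hPs : ∀ v, Ps v = g ‖v‖ • v) :
    ∀ P : EuclideanSpace ℝ (Fin 3), ∃! v : EuclideanSpace ℝ (Fin 3),
      ‖v‖ < 1 ∧ Ps v = P := by
  have hmomentum : EqOn (fun u => u * g u) (solitonMomentum m_b m_e) (Ico 0 1) := by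
    rintro u ⟨hu0, hu1⟩
    rcases hu0.eq_or_lt with rfl | hu
    · simp
    · simp only [solitonMomentum, abrahamMomentum, hg u hu hu1]
      field_simp
  have hmono := (strictMonoOn_solitonMomentum hmb hme).congr hmomentum.symm
  have hsurj : SurjOn (fun u => u * g u) (Ico 0 1) (Ici 0) := by
    simpa [hmomentum.surjOn_iff] using surjOn_Ico_of_tendsto_atTop zero_lt_one
      continuousOn_solitonMomentum (tendsto_solitonMomentum_atTop hmb hme)
  have hpos : ∀ u ∈ Ioo (0 : ℝ) 1, 0 < g u := fun u hu => by
    have := hmono (left_mem_Ico.2 zero_lt_one) (Ioo_subset_Ico_self hu) hu.1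
    simp only [zero_mul] at this
    exact pos_of_mul_pos_right this hu.1.le
  intro P
  simpa only [hPs] using existsUnique_norm_lt_one_smul_eq hpos hmono.injOn hsurj P

/-- The soliton velocity–momentum map `v ↦ P_s(v)` is a bijection from the open unit
ball of ℝ³ onto ℝ³. -/
theorem soliton_momentum_bijective
    (m_b m_e : ℝ) (hmb : 0 ≤ m_b) (hme : 0 < m_e)
    (g : ℝ → ℝ)
    (hg : ∀ u : ℝ, 0 < u → u < 1 →
      g u = m_b * (Real.sqrt (1 - u^2))⁻¹
        + m_e * (u^2)⁻¹ * ((1 + u^2) / (2 * u) * Real.log ((1 + u) / (1 - u)) - 1))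
    (hg0 : g 0 = m_b + (4/3) * m_e)
    (Ps : EuclideanSpace ℝ (Fin 3) → EuclideanSpace ℝ (Fin 3))
    (hPs : ∀ v, Ps v = g ‖v‖ • v) :
    ∀ P : EuclideanSpace ℝ (Fin 3), ∃! v : EuclideanSpace ℝ (Fin 3),
      ‖v‖ < 1 ∧ Ps v = P :=
  soliton_momentum_bijective_general m_b m_e hmb hme g hg Ps hPs
end
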